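/- The formula ((p→p)→r)→(q→r) (for distinct propositional variables p, q, r) is a theorem of WF_[→]+I_R but is not a theorem of WF_[→]. -/
import Mathlib


/-- Implicational formulas: built from propositional variables using only `→`. -/
inductive Fm : Type
  | var : ℕ → Fm
  | imp : Fm → Fm → Fm

/-- `chain [A₁,…,Aₙ] E` is the formula `A₁→(A₂→(⋯→(Aₙ→E)⋯))` (and `E` when n = 0). -/
def chain : List Fm → Fm → Fm
  | [], E => E
  | A :: L, E => Fm.imp A (chain L E)

/-- Theorems of the Hilbert system `WF_[→]`. -/
inductive WFThm : Fm → Prop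
  | id (A : Fm) : WFThm (A.imp A)
  | mp {A B : Fm} : WFThm A → WFThm (A.imp B) → WFThm B
  | afort {A : Fm} (B : Fm) : WFThm A → WFThm (B.imp A)
  | trans {A B C : Fm} : WFThm (A.imp B) → WFThm (B.imp C) → WFThm (A.imp C)
  | equiv {A B C D : Fm} :
      WFThm (A.imp B) → WFThm (B.imp A) → WFThm (C.imp D) → WFThm (D.imp C) →
      WFThm ((A.imp C).imp (B.imp D))

/-- Theorems of `WF_[→] + I_R`. -/
inductive WFIRThm : Fm → Prop
  | id (A : Fm) : WFIRThm (A.imp A)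
  | mp {A B : Fm} : WFIRThm A → WFIRThm (A.imp B) → WFIRThm B
  | afort {A : Fm} (B : Fm) : WFIRThm A → WFIRThm (B.imp A)
  | trans {A B C : Fm} : WFIRThm (A.imp B) → WFIRThm (B.imp C) → WFIRThm (A.imp C)
  | equiv {A B C D : Fm} :
      WFIRThm (A.imp B) → WFIRThm (B.imp A) → WFIRThm (C.imp D) → WFIRThm (D.imp C) →
      WFIRThm ((A.imp C).imp (B.imp D))
  | iR {A B : Fm} (C : Fm) : WFIRThm (A.imp B) → WFIRThm ((B.imp C).imp (A.imp C))

/-- Matrix implication on `Fin 3` used for the countermodel. Designated value: 0. -/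
def imp3 : Fin 3 → Fin 3 → Fin 3
  | 0, 0 => 0 | 0, 1 => 1 | 0, 2 => 1
  | 1, 0 => 0 | 1, 1 => 0 | 1, 2 => 1
  | 2, 0 => 0 | 2, 1 => 2 | 2, 2 => 0

/-- Evaluation of formulas in the matrix. -/
def val (v : ℕ → Fin 3) : Fm → Fin 3
  | Fm.var n => v n
  | Fm.imp A B => imp3 (val v A) (val v B)

lemma wf_sound (v : ℕ → Fin 3) {A : Fm} (h : WFThm A) : val v A = 0 := by
  induction h with
  | id A => revert A; intro A; show imp3 (val v A) (val v A) = 0; generalize val v A = a; revert a; decide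
  | mp h1 h2 ih1 ih2 =>
      revert ih1 ih2; show val v _ = 0 → imp3 (val v _) (val v _) = 0 → val v _ = 0
      generalize val v _ = a; generalize val v _ = b; revert a b; decide
  | afort B h ih =>
      show imp3 (val v B) (val v _) = 0
      rw [ih]; generalize val v B = b; revert b; decide
  | trans h1 h2 ih1 ih2 =>
      revert ih1 ih2
      show imp3 (val v _) (val v _) = 0 → imp3 (val v _) (val v _) = 0 →
        imp3 (val v _) (val v _) = 0
      generalize val v _ = a; generalize val v _ = b; generalize val v _ = c
      revert a b c; decide
  | equiv h1 h2 h3 h4 ih1 ih2 ih3 ih4 =>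
      revert ih1 ih2 ih3 ih4
      show imp3 (val v _) (val v _) = 0 → imp3 (val v _) (val v _) = 0 →
        imp3 (val v _) (val v _) = 0 → imp3 (val v _) (val v _) = 0 →
        imp3 (imp3 (val v _) (val v _)) (imp3 (val v _) (val v _)) = 0
      generalize val v _ = a; generalize val v _ = b; generalize val v _ = c
      generalize val v _ = d; revert a b c d; decide

theorem separating_formula (p q r : ℕ) (hpq : p ≠ q) (hpr : p ≠ r) (hqr : q ≠ r) :
    WFIRThm ((((Fm.var p).imp (Fm.var p)).imp (Fm.var r)).imp ((Fm.var q).imp (Fm.var r))) ∧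
    ¬ WFThm ((((Fm.var p).imp (Fm.var p)).imp (Fm.var r)).imp ((Fm.var q).imp (Fm.var r))) := by
  constructor
  · exact WFIRThm.iR (Fm.var r) (WFIRThm.afort _ (WFIRThm.id (Fm.var p)))
  · intro h
    have := wf_sound (fun n => if n = p then 0 else if n = q then 2 else 1) h
    simp [val, hpq, hpr, hqr, Ne.symm hpq, Ne.symm hpr, Ne.symm hqr] at this
    revert this; decide
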